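/- arXiv:1703.06760 — 2 statements merged into one kernel-verified Lean document; each statement's English description precedes it below -/
import Mathlib

section
/- Let E and F be reflexive Banach spaces, let G be a closed subspace of the compact operators from E to F, and let (T_m) be a sequence in G with T ∈ G. Then T_m → T weakly in G if and only if y'(T_m(x)) → y'(T(x)) for every x ∈ E and every y' ∈ F'. -/
open NormedSpace Filter Topology

noncomputable section

/-- The Banach-space adjoint of a continuous linear map. -/
def adj (𝕜 : Type*) {A B : Type*} [RCLike 𝕜] [NormedAddCommGroup A] [NormedSpace 𝕜 A]
    [NormedAddCommGroup B] [NormedSpace 𝕜 B] (T : A →L[𝕜] B) :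
    StrongDual 𝕜 B →L[𝕜] StrongDual 𝕜 A :=
  (ContinuousLinearMap.compL 𝕜 A B 𝕜).flip T

/-- A normed space is reflexive if the canonical embedding into its bidual is surjective. -/
def IsReflexive (𝕜 E : Type*) [RCLike 𝕜] [NormedAddCommGroup E] [NormedSpace 𝕜 E] : Prop :=
  Function.Surjective (inclusionInDoubleDual 𝕜 E)

open MeasureTheory Set TopologicalSpace
open scoped ENNReal NNReal

set_option maxHeartbeats 1000000
set_option synthInstance.maxHeartbeats 200000

namespace WCProof

section FunctionSide


variable {X : Type*} [TopologicalSpace X] [CompactSpace X]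

/-- The set of test values for the positive part of `ψ` at `f`. -/
def posSet (ψ : C(X, ℝ) →L[ℝ] ℝ) (f : C(X, ℝ)) : Set ℝ :=
  ψ '' {g | 0 ≤ g ∧ g ≤ f}

/-- Positive part of a functional, on nonnegative functions. -/
def pos (ψ : C(X, ℝ) →L[ℝ] ℝ) (f : C(X, ℝ)) : ℝ :=
  sSup (posSet ψ f)

lemma norm_le_of_le {g f : C(X, ℝ)} (hg0 : 0 ≤ g) (hgf : g ≤ f) : ‖g‖ ≤ ‖f‖ := by
  refine (ContinuousMap.norm_le _ (norm_nonneg f)).2 fun x => ?_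
  have h0 : (0 : ℝ) ≤ g x := ContinuousMap.le_def.1 hg0 x
  have h1 : g x ≤ f x := ContinuousMap.le_def.1 hgf x
  have h2 : |f x| ≤ ‖f‖ := by
    simpa using (f.norm_coe_le_norm x)
  rw [Real.norm_eq_abs, abs_of_nonneg h0]
  exact le_trans h1 (le_trans (le_abs_self _) h2)

lemma posSet_nonempty (ψ : C(X, ℝ) →L[ℝ] ℝ) {f : C(X, ℝ)} (hf : 0 ≤ f) :
    (posSet ψ f).Nonempty :=
  ⟨ψ 0, 0, ⟨le_refl 0, hf⟩, rfl⟩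

lemma posSet_bddAbove (ψ : C(X, ℝ) →L[ℝ] ℝ) (f : C(X, ℝ)) :
    BddAbove (posSet ψ f) := by
  refine ⟨‖ψ‖ * ‖f‖, fun a ha => ?_⟩
  obtain ⟨g, ⟨hg0, hgf⟩, rfl⟩ := ha
  calc ψ g ≤ |ψ g| := le_abs_self _
    _ ≤ ‖ψ‖ * ‖g‖ := by simpa using ψ.le_opNorm g
    _ ≤ ‖ψ‖ * ‖f‖ := by
        exact mul_le_mul_of_nonneg_left (norm_le_of_le hg0 hgf) (norm_nonneg ψ)

lemma pos_nonneg (ψ : C(X, ℝ) →L[ℝ] ℝ) {f : C(X, ℝ)} (hf : 0 ≤ f) : 0 ≤ pos ψ f := by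
  have : ψ 0 ≤ pos ψ f := le_csSup (posSet_bddAbove ψ f) ⟨0, ⟨le_refl 0, hf⟩, rfl⟩
  simpa using this

lemma le_pos (ψ : C(X, ℝ) →L[ℝ] ℝ) {f : C(X, ℝ)} (hf : 0 ≤ f) : ψ f ≤ pos ψ f :=
  le_csSup (posSet_bddAbove ψ f) ⟨f, ⟨hf, le_refl f⟩, rfl⟩

lemma pos_mono (ψ : C(X, ℝ) →L[ℝ] ℝ) {f₁ f₂ : C(X, ℝ)} (hf₁ : 0 ≤ f₁) (h : f₁ ≤ f₂) :
    pos ψ f₁ ≤ pos ψ f₂ := by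
  refine csSup_le_csSup (posSet_bddAbove ψ f₂) (posSet_nonempty ψ hf₁) ?_
  rintro a ⟨g, ⟨hg0, hgf⟩, rfl⟩
  exact ⟨g, ⟨hg0, le_trans hgf h⟩, rfl⟩

lemma pos_le_of_forall (ψ : C(X, ℝ) →L[ℝ] ℝ) {f : C(X, ℝ)} (hf : 0 ≤ f) {c : ℝ}
    (h : ∀ g : C(X, ℝ), 0 ≤ g → g ≤ f → ψ g ≤ c) : pos ψ f ≤ c := by
  refine csSup_le (posSet_nonempty ψ hf) ?_
  rintro a ⟨g, ⟨hg0, hgf⟩, rfl⟩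
  exact h g hg0 hgf

lemma pos_norm_le (ψ : C(X, ℝ) →L[ℝ] ℝ) {f : C(X, ℝ)} (hf : 0 ≤ f) :
    pos ψ f ≤ ‖ψ‖ * ‖f‖ := by
  refine pos_le_of_forall ψ hf fun g hg0 hgf => ?_
  calc ψ g ≤ |ψ g| := le_abs_self _
    _ ≤ ‖ψ‖ * ‖g‖ := by simpa using ψ.le_opNorm g
    _ ≤ ‖ψ‖ * ‖f‖ := mul_le_mul_of_nonneg_left (norm_le_of_le hg0 hgf) (norm_nonneg ψ)

lemma pos_add (ψ : C(X, ℝ) →L[ℝ] ℝ) {f₁ f₂ : C(X, ℝ)} (hf₁ : 0 ≤ f₁) (hf₂ : 0 ≤ f₂) :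
    pos ψ (f₁ + f₂) = pos ψ f₁ + pos ψ f₂ := by
  have hsum : 0 ≤ f₁ + f₂ := by
    rw [ContinuousMap.le_def] at hf₁ hf₂ ⊢
    intro a; have := hf₁ a; have := hf₂ a
    simp only [ContinuousMap.add_apply, ContinuousMap.zero_apply] at *
    linarith
  apply le_antisymm
  · refine pos_le_of_forall ψ hsum fun g hg0 hgf => ?_
    set g₁ : C(X, ℝ) := g ⊓ f₁ with hg₁def
    set g₂ : C(X, ℝ) := g - g ⊓ f₁ with hg₂def
    have hdecomp : g = g₁ + g₂ := by ext a; simp [hg₁def, hg₂def]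
    have hg₁0 : 0 ≤ g₁ := le_inf hg0 hf₁
    have hg₁f : g₁ ≤ f₁ := inf_le_right
    have hg₂0 : 0 ≤ g₂ := by
      rw [ContinuousMap.le_def]; intro a
      simp only [hg₂def, ContinuousMap.sub_apply, ContinuousMap.inf_apply,
        ContinuousMap.zero_apply]
      exact sub_nonneg.2 inf_le_left
    have hg₂f : g₂ ≤ f₂ := by
      rw [ContinuousMap.le_def]; intro a
      have h1 : g a ≤ f₁ a + f₂ a := by
        have := ContinuousMap.le_def.1 hgf a; simpa using this
      have h2 : (0:ℝ) ≤ f₂ a := ContinuousMap.le_def.1 hf₂ a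
      simp only [hg₂def, ContinuousMap.sub_apply, ContinuousMap.inf_apply]
      rcases le_total (g a) (f₁ a) with h | h
      · rw [min_eq_left h]; linarith
      · rw [min_eq_right h]; linarith
    have := hdecomp ▸ (map_add ψ g₁ g₂)
    rw [hdecomp, map_add]
    exact add_le_add (le_csSup (posSet_bddAbove ψ f₁) ⟨g₁, ⟨hg₁0, hg₁f⟩, rfl⟩)
      (le_csSup (posSet_bddAbove ψ f₂) ⟨g₂, ⟨hg₂0, hg₂f⟩, rfl⟩)
  · -- sup + sup ≤ sup of sums
    rw [pos, pos, pos]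
    have hkey : sSup (posSet ψ f₁) ≤ sSup (posSet ψ (f₁ + f₂)) - sSup (posSet ψ f₂) := by
      refine csSup_le (posSet_nonempty ψ hf₁) ?_
      rintro a ⟨g₁, ⟨hg₁0, hg₁f⟩, rfl⟩
      have h2 : sSup (posSet ψ f₂) ≤ sSup (posSet ψ (f₁ + f₂)) - ψ g₁ := by
        refine csSup_le (posSet_nonempty ψ hf₂) ?_
        rintro b ⟨g₂, ⟨hg₂0, hg₂f⟩, rfl⟩
        have hmem : ψ (g₁ + g₂) ∈ posSet ψ (f₁ + f₂) := by
          refine ⟨g₁ + g₂, ⟨?_, ?_⟩, rfl⟩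
          · rw [ContinuousMap.le_def]; intro a
            have := ContinuousMap.le_def.1 hg₁0 a; have := ContinuousMap.le_def.1 hg₂0 a
            simp only [ContinuousMap.add_apply, ContinuousMap.zero_apply] at *
            linarith
          · rw [ContinuousMap.le_def]; intro a
            have := ContinuousMap.le_def.1 hg₁f a; have := ContinuousMap.le_def.1 hg₂f a
            simp only [ContinuousMap.add_apply] at *
            linarith
        have := le_csSup (posSet_bddAbove ψ (f₁ + f₂)) hmem
        rw [map_add] at this
        linarith
      linarith
    linarith [hkey]

lemma pos_smul (ψ : C(X, ℝ) →L[ℝ] ℝ) {f : C(X, ℝ)} (hf : 0 ≤ f) {c : ℝ} (hc : 0 < c) :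
    pos ψ (c • f) = c * pos ψ f := by
  have hcf : 0 ≤ c • f := by
    rw [ContinuousMap.le_def]; intro a
    have := ContinuousMap.le_def.1 hf a
    simp only [ContinuousMap.smul_apply, ContinuousMap.zero_apply, smul_eq_mul] at *
    positivity
  apply le_antisymm
  · refine pos_le_of_forall ψ hcf fun g hg0 hgf => ?_
    have hmem : ψ (c⁻¹ • g) ∈ posSet ψ f := by
      refine ⟨c⁻¹ • g, ⟨?_, ?_⟩, rfl⟩
      · rw [ContinuousMap.le_def]; intro a
        have := ContinuousMap.le_def.1 hg0 a
        simp only [ContinuousMap.smul_apply, ContinuousMap.zero_apply, smul_eq_mul] at *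
        positivity
      · rw [ContinuousMap.le_def]; intro a
        have := ContinuousMap.le_def.1 hgf a
        simp only [ContinuousMap.smul_apply, smul_eq_mul] at *
        rw [inv_mul_le_iff₀ hc]
        linarith
    have hle := le_csSup (posSet_bddAbove ψ f) hmem
    have : ψ g = c * ψ (c⁻¹ • g) := by
      rw [ψ.map_smul, smul_eq_mul, ← mul_assoc, mul_inv_cancel₀ hc.ne', one_mul]
    rw [this]
    exact mul_le_mul_of_nonneg_left hle (le_of_lt hc)
  · rw [mul_comm, ← le_div_iff₀ hc]
    refine pos_le_of_forall ψ hf fun g hg0 hgf => ?_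
    have hmem : ψ (c • g) ∈ posSet ψ (c • f) := by
      refine ⟨c • g, ⟨?_, ?_⟩, rfl⟩
      · rw [ContinuousMap.le_def]; intro a
        have := ContinuousMap.le_def.1 hg0 a
        simp only [ContinuousMap.smul_apply, ContinuousMap.zero_apply, smul_eq_mul] at *
        positivity
      · rw [ContinuousMap.le_def]; intro a
        have := ContinuousMap.le_def.1 hgf a
        simp only [ContinuousMap.smul_apply, smul_eq_mul] at *
        exact mul_le_mul_of_nonneg_left this (le_of_lt hc)
    have hle := le_csSup (posSet_bddAbove ψ (c • f)) hmem
    rw [ψ.map_smul] at hle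
    rw [le_div_iff₀ hc, mul_comm]
    simpa [pos] using hle

section ContentPart

variable [T2Space X]

/-- Set of values of `pos ψ` on functions dominating the indicator of `C`. -/
def rcSet (ψ : C(X, ℝ) →L[ℝ] ℝ) (C : Set X) : Set ℝ :=
  (pos ψ) '' {f | 0 ≤ f ∧ ∀ x ∈ C, 1 ≤ f x}

/-- Content associated to (the positive part of) `ψ`. -/
def rc (ψ : C(X, ℝ) →L[ℝ] ℝ) (C : Set X) : ℝ :=
  sInf (rcSet ψ C)

lemma one_mem_rcSet (ψ : C(X, ℝ) →L[ℝ] ℝ) (C : Set X) :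
    pos ψ 1 ∈ rcSet ψ C := by
  refine ⟨1, ⟨?_, fun x _ => le_refl _⟩, rfl⟩
  rw [ContinuousMap.le_def]; intro a; simp

lemma rcSet_nonempty (ψ : C(X, ℝ) →L[ℝ] ℝ) (C : Set X) : (rcSet ψ C).Nonempty :=
  ⟨pos ψ 1, one_mem_rcSet ψ C⟩

lemma rcSet_bddBelow (ψ : C(X, ℝ) →L[ℝ] ℝ) (C : Set X) : BddBelow (rcSet ψ C) := by
  refine ⟨0, fun a ha => ?_⟩
  obtain ⟨f, ⟨hf0, _⟩, rfl⟩ := ha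
  exact pos_nonneg ψ hf0

lemma rc_nonneg (ψ : C(X, ℝ) →L[ℝ] ℝ) (C : Set X) : 0 ≤ rc ψ C :=
  le_csInf (rcSet_nonempty ψ C) (fun a ha => by
    obtain ⟨f, ⟨hf0, _⟩, rfl⟩ := ha; exact pos_nonneg ψ hf0)

lemma rc_le (ψ : C(X, ℝ) →L[ℝ] ℝ) {C : Set X} {f : C(X, ℝ)} (hf0 : 0 ≤ f)
    (hf1 : ∀ x ∈ C, 1 ≤ f x) : rc ψ C ≤ pos ψ f :=
  csInf_le (rcSet_bddBelow ψ C) ⟨f, ⟨hf0, hf1⟩, rfl⟩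

lemma le_rc (ψ : C(X, ℝ) →L[ℝ] ℝ) {C : Set X} {c : ℝ}
    (h : ∀ f : C(X, ℝ), 0 ≤ f → (∀ x ∈ C, 1 ≤ f x) → c ≤ pos ψ f) : c ≤ rc ψ C :=
  le_csInf (rcSet_nonempty ψ C) (fun a ha => by
    obtain ⟨f, ⟨hf0, hf1⟩, rfl⟩ := ha; exact h f hf0 hf1)

lemma rc_mono (ψ : C(X, ℝ) →L[ℝ] ℝ) {C₁ C₂ : Set X} (h : C₁ ⊆ C₂) :
    rc ψ C₁ ≤ rc ψ C₂ := by
  refine csInf_le_csInf (rcSet_bddBelow ψ C₁) (rcSet_nonempty ψ C₂) ?_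
  rintro a ⟨f, ⟨hf0, hf1⟩, rfl⟩
  exact ⟨f, ⟨hf0, fun x hx => hf1 x (h hx)⟩, rfl⟩

lemma rc_le_pos_one (ψ : C(X, ℝ) →L[ℝ] ℝ) (C : Set X) : rc ψ C ≤ pos ψ 1 :=
  csInf_le (rcSet_bddBelow ψ C) (one_mem_rcSet ψ C)

lemma rc_union_le (ψ : C(X, ℝ) →L[ℝ] ℝ) (C₁ C₂ : Set X) :
    rc ψ (C₁ ∪ C₂) ≤ rc ψ C₁ + rc ψ C₂ := by
  have hkey : rc ψ (C₁ ∪ C₂) - rc ψ C₂ ≤ rc ψ C₁ := by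
    refine le_rc ψ fun f₁ hf₁0 hf₁1 => ?_
    have h2 : rc ψ (C₁ ∪ C₂) - pos ψ f₁ ≤ rc ψ C₂ := by
      refine le_rc ψ fun f₂ hf₂0 hf₂1 => ?_
      have hadm : ∀ x ∈ C₁ ∪ C₂, 1 ≤ (f₁ + f₂) x := by
        intro x hx
        have h1 := ContinuousMap.le_def.1 hf₁0 x
        have h2 := ContinuousMap.le_def.1 hf₂0 x
        simp only [ContinuousMap.zero_apply] at h1 h2
        rcases hx with hx | hx
        · have := hf₁1 x hx; simp only [ContinuousMap.add_apply]; linarith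
        · have := hf₂1 x hx; simp only [ContinuousMap.add_apply]; linarith
      have hadm0 : 0 ≤ f₁ + f₂ := by
        rw [ContinuousMap.le_def]; intro a
        have h1 := ContinuousMap.le_def.1 hf₁0 a
        have h2 := ContinuousMap.le_def.1 hf₂0 a
        simp only [ContinuousMap.zero_apply, ContinuousMap.add_apply] at *
        linarith
      have := rc_le ψ hadm0 hadm
      rw [pos_add ψ hf₁0 hf₂0] at this
      linarith
    linarith [h2]
  linarith [hkey]

lemma rc_union_disjoint (ψ : C(X, ℝ) →L[ℝ] ℝ) {C₁ C₂ : Set X}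
    (h₁ : IsClosed C₁) (h₂ : IsClosed C₂) (hd : Disjoint C₁ C₂) :
    rc ψ C₁ + rc ψ C₂ ≤ rc ψ (C₁ ∪ C₂) := by
  obtain ⟨g, hg0, hg1, hg01⟩ := exists_continuous_zero_one_of_isClosed h₂ h₁ hd.symm
  refine le_rc ψ fun f hf0 hf1 => ?_
  have hfg0 : 0 ≤ f * g := by
    rw [ContinuousMap.le_def]; intro a
    have h1 := ContinuousMap.le_def.1 hf0 a
    have h2 := (hg01 a).1
    simp only [ContinuousMap.zero_apply, ContinuousMap.mul_apply] at *
    positivity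
  have hfg1 : ∀ x ∈ C₁, 1 ≤ (f * g) x := by
    intro x hx
    have := hf1 x (Or.inl hx)
    have hgx : g x = 1 := hg1 hx
    simp only [ContinuousMap.mul_apply, hgx, mul_one]
    exact this
  have hfg0' : 0 ≤ f * (1 - g) := by
    rw [ContinuousMap.le_def]; intro a
    have h1 := ContinuousMap.le_def.1 hf0 a
    have h2 := (hg01 a).2
    simp only [ContinuousMap.zero_apply, ContinuousMap.mul_apply, ContinuousMap.sub_apply,
      ContinuousMap.one_apply] at *
    nlinarith
  have hfg1' : ∀ x ∈ C₂, 1 ≤ (f * (1 - g)) x := by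
    intro x hx
    have := hf1 x (Or.inr hx)
    have hgx : g x = 0 := hg0 hx
    simp only [ContinuousMap.mul_apply, ContinuousMap.sub_apply, ContinuousMap.one_apply, hgx,
      sub_zero, mul_one]
    exact this
  have hsum : f * g + f * (1 - g) = f := by ext a; simp; ring
  have := pos_add ψ hfg0 hfg0'
  rw [hsum] at this
  have hle₁ := rc_le ψ hfg0 hfg1
  have hle₂ := rc_le ψ hfg0' hfg1'
  linarith

/-- The content (in the sense of `MeasureTheory.Content`) associated to `ψ`. -/
def content (ψ : C(X, ℝ) →L[ℝ] ℝ) : Content X where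
  toFun C := Real.toNNReal (rc ψ (C : Set X))
  mono' K₁ K₂ h := Real.toNNReal_mono (rc_mono ψ h)
  sup_disjoint' K₁ K₂ hd hc₁ hc₂ := by
    have heq : rc ψ ((K₁ ⊔ K₂ : Compacts X) : Set X) = rc ψ (K₁ : Set X) + rc ψ (K₂ : Set X) := by
      have h1 : ((K₁ ⊔ K₂ : Compacts X) : Set X) = (K₁ : Set X) ∪ (K₂ : Set X) := rfl
      rw [h1]
      exact le_antisymm (rc_union_le ψ _ _) (rc_union_disjoint ψ hc₁ hc₂ hd)
    rw [heq, Real.toNNReal_add (rc_nonneg ψ _) (rc_nonneg ψ _)]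
  sup_le' K₁ K₂ := by
    have h1 : ((K₁ ⊔ K₂ : Compacts X) : Set X) = (K₁ : Set X) ∪ (K₂ : Set X) := rfl
    have := rc_union_le ψ (K₁ : Set X) (K₂ : Set X)
    calc Real.toNNReal (rc ψ ((K₁ ⊔ K₂ : Compacts X) : Set X))
        ≤ Real.toNNReal (rc ψ (K₁ : Set X) + rc ψ (K₂ : Set X)) := by
          rw [h1]; exact Real.toNNReal_mono this
      _ = Real.toNNReal (rc ψ (K₁ : Set X)) + Real.toNNReal (rc ψ (K₂ : Set X)) :=
          Real.toNNReal_add (rc_nonneg ψ _) (rc_nonneg ψ _)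

lemma pos_tendsto (ψ : C(X, ℝ) →L[ℝ] ℝ) {v : ℕ → C(X, ℝ)} {M : ℝ}
    (hv0 : ∀ k, 0 ≤ v k) (hvM : ∀ k, ‖v k‖ ≤ M)
    (hpt : ∀ x : X, Tendsto (fun k => (v k) x) atTop (𝓝 0)) :
    Tendsto (fun k => pos ψ (v k)) atTop (𝓝 0) := by
  borelize X
  set κ := content ψ with hκ
  set μ := κ.measure with hμ
  have hμ_open : ∀ (U : Set X) (hU : IsOpen U), μ U = κ.innerContent ⟨U, hU⟩ := by
    intro U hU
    rw [hμ, Content.measure_apply _ hU.measurableSet]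
    exact κ.outerMeasure_opens ⟨U, hU⟩
  have hinner_le : ∀ (U : Set X) (hU : IsOpen U), κ.innerContent ⟨U, hU⟩ ≤
      (Real.toNNReal (pos ψ 1) : ℝ≥0∞) := by
    intro U hU
    refine iSup_le fun K => iSup_le fun _ => ?_
    exact ENNReal.coe_le_coe.2 (Real.toNNReal_mono (rc_le_pos_one ψ _))
  have hfin : IsFiniteMeasure μ := by
    constructor
    rw [hμ_open Set.univ isOpen_univ]
    exact lt_of_le_of_lt (hinner_le _ _) (ENNReal.coe_lt_top)
  rw [Metric.tendsto_atTop]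
  intro ε' hε'
  set M₀ : ℝ := max M 1 with hM₀def
  have hM₀ : 0 < M₀ := lt_of_lt_of_le one_pos (le_max_right _ _)
  have hvM₀ : ∀ k, ‖v k‖ ≤ M₀ := fun k => le_trans (hvM k) (le_max_left _ _)
  set ε : ℝ := ε' / (2 * (‖ψ‖ + 1)) with hεdef
  have hε : 0 < ε := by
    apply div_pos hε'
    positivity
  -- the open sets
  set V : ℕ → Set X := fun N => ⋃ (k : ℕ) (_ : N ≤ k), {x : X | ε / 2 < (v k) x} with hVdef
  have hVopen : ∀ N, IsOpen (V N) :=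
    fun N => isOpen_iUnion fun k => isOpen_iUnion fun _ =>
      isOpen_lt continuous_const (v k).continuous
  have hVanti : Antitone V := by
    intro N₁ N₂ h
    refine Set.iUnion₂_subset fun k hk => ?_
    exact Set.subset_iUnion₂ (s := fun k _ => {x : X | ε / 2 < (v k) x}) k (le_trans h hk)
  have hVempty : ⋂ N, V N = (∅ : Set X) := by
    ext x
    simp only [Set.mem_iInter, Set.mem_empty_iff_false, iff_false]
    intro hx
    obtain ⟨N, hN⟩ := Metric.tendsto_atTop.1 (hpt x) (ε / 2) (by positivity)
    obtain ⟨k, hk, hxk⟩ := by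
      have := hx N
      simpa only [hVdef, Set.mem_iUnion, Set.mem_setOf_eq, exists_prop] using this
    have := hN k hk
    rw [Real.dist_eq, sub_zero] at this
    have : (v k) x < ε / 2 := lt_of_abs_lt this
    linarith
  have hμV : Tendsto (fun N => μ (V N)) atTop (𝓝 0) := by
    have h := tendsto_measure_iInter_atTop (μ := μ)
      (fun N => ((hVopen N).measurableSet).nullMeasurableSet) hVanti
      ⟨0, measure_ne_top μ _⟩
    rw [hVempty, measure_empty] at h
    exact h
  have hμVr : Tendsto (fun N => (μ (V N)).toReal) atTop (𝓝 0) := by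
    have : Tendsto (fun N => (μ (V N)).toReal) atTop (𝓝 ((0 : ℝ≥0∞)).toReal) :=
      (ENNReal.tendsto_toReal (by simp)).comp hμV
    simpa using this
  obtain ⟨N₀, hN₀⟩ := Metric.tendsto_atTop.1 hμVr (ε' / (2 * M₀)) (by positivity)
  refine ⟨N₀, fun k hk => ?_⟩
  rw [Real.dist_eq, sub_zero, abs_of_nonneg (pos_nonneg ψ (hv0 k))]
  -- the compact set
  set C : Set X := {x : X | ε ≤ (v k) x} with hCdef
  have hCclosed : IsClosed C := isClosed_le continuous_const (v k).continuous
  have hCcomp : IsCompact C := hCclosed.isCompact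
  have hCV : C ⊆ V k := by
    intro x hx
    have : ε / 2 < (v k) x := lt_of_lt_of_le (by linarith) hx
    exact Set.mem_iUnion₂.2 ⟨k, le_refl k, this⟩
  have hrcμ : rc ψ C ≤ (μ (V k)).toReal := by
    have h1 : (κ.toFun ⟨C, hCcomp⟩ : ℝ≥0∞) ≤ κ.innerContent ⟨V k, hVopen k⟩ :=
      κ.le_innerContent ⟨C, hCcomp⟩ ⟨V k, hVopen k⟩ hCV
    rw [← hμ_open (V k) (hVopen k)] at h1
    have h2 : ((κ.toFun ⟨C, hCcomp⟩ : ℝ≥0∞)).toReal ≤ (μ (V k)).toReal :=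
      ENNReal.toReal_mono (measure_ne_top μ _) h1
    have h3 : ((κ.toFun ⟨C, hCcomp⟩ : ℝ≥0∞)).toReal = rc ψ C := by
      simp [hκ, content, Real.coe_toNNReal _ (rc_nonneg ψ C)]
    rwa [h3] at h2
  -- the function decomposition
  set w : C(X, ℝ) := (v k - ε • (1 : C(X, ℝ))) ⊔ 0 with hwdef
  have hw0 : 0 ≤ w := le_sup_right
  have hvw : v k ≤ ε • (1 : C(X, ℝ)) + w := by
    rw [ContinuousMap.le_def]; intro a
    simp only [hwdef, ContinuousMap.add_apply, ContinuousMap.sup_apply,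
      ContinuousMap.sub_apply, ContinuousMap.smul_apply, ContinuousMap.one_apply,
      ContinuousMap.zero_apply, smul_eq_mul, mul_one]
    rcases le_total ((v k) a - ε) 0 with h | h
    · rw [sup_eq_right.2 h]; linarith
    · rw [sup_eq_left.2 h]; linarith
  have hsmul0 : 0 ≤ ε • (1 : C(X, ℝ)) := by
    rw [ContinuousMap.le_def]; intro a
    simp only [ContinuousMap.smul_apply, ContinuousMap.one_apply, ContinuousMap.zero_apply,
      smul_eq_mul, mul_one]
    positivity
  have hsplit : pos ψ (v k) ≤ pos ψ (ε • (1 : C(X, ℝ))) + pos ψ w := by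
    have := pos_mono ψ (hv0 k) hvw
    rwa [pos_add ψ hsmul0 hw0] at this
  have hterm1 : pos ψ (ε • (1 : C(X, ℝ))) ≤ ‖ψ‖ * ε := by
    have h1 : ‖ε • (1 : C(X, ℝ))‖ ≤ ε := by
      refine (ContinuousMap.norm_le _ (le_of_lt hε)).2 fun x => ?_
      simp only [ContinuousMap.smul_apply, ContinuousMap.one_apply, smul_eq_mul, mul_one,
        Real.norm_eq_abs, abs_of_pos hε, le_refl]
    calc pos ψ (ε • (1 : C(X, ℝ))) ≤ ‖ψ‖ * ‖ε • (1 : C(X, ℝ))‖ := pos_norm_le ψ hsmul0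
      _ ≤ ‖ψ‖ * ε := mul_le_mul_of_nonneg_left h1 (norm_nonneg ψ)
  have hterm2 : pos ψ w ≤ M₀ * rc ψ C := by
    have hdiv : pos ψ w / M₀ ≤ rc ψ C := by
      refine le_rc ψ fun f hf0 hf1 => ?_
      have hwf : w ≤ M₀ • f := by
        rw [ContinuousMap.le_def]; intro a
        have hf0a := ContinuousMap.le_def.1 hf0 a
        simp only [ContinuousMap.zero_apply] at hf0a
        simp only [hwdef, ContinuousMap.sup_apply, ContinuousMap.sub_apply,
          ContinuousMap.smul_apply, ContinuousMap.one_apply, ContinuousMap.zero_apply,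
          smul_eq_mul, mul_one]
        rcases le_total ε ((v k) a) with h | h
        · have hfa : 1 ≤ f a := hf1 a h
          have hva : (v k) a ≤ M₀ := by
            have := (v k).norm_coe_le_norm a
            have h2 := hvM₀ k
            calc (v k) a ≤ |(v k) a| := le_abs_self _
              _ ≤ ‖v k‖ := by simpa using this
              _ ≤ M₀ := h2
          rcases le_total ((v k) a - ε) 0 with h' | h'
          · rw [sup_eq_right.2 h']; positivity
          · rw [sup_eq_left.2 h']
            calc (v k) a - ε ≤ M₀ := by linarith
              _ = M₀ * 1 := by ring
              _ ≤ M₀ * f a := by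
                  exact mul_le_mul_of_nonneg_left hfa (le_of_lt hM₀)
        · have h' : (v k) a - ε ≤ 0 := by linarith
          rw [sup_eq_right.2 h']
          positivity
      have := pos_mono ψ hw0 hwf
      rw [pos_smul ψ hf0 hM₀] at this
      rw [div_le_iff₀ hM₀]
      linarith [this]
    rw [div_le_iff₀ hM₀] at hdiv
    linarith
  have hμbound := hN₀ k hk
  rw [Real.dist_eq, sub_zero] at hμbound
  have hμbound' : (μ (V k)).toReal < ε' / (2 * M₀) := lt_of_abs_lt hμbound
  have hterm2' : M₀ * rc ψ C < ε' / 2 := by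
    have h1 : M₀ * rc ψ C ≤ M₀ * (μ (V k)).toReal :=
      mul_le_mul_of_nonneg_left hrcμ (le_of_lt hM₀)
    have h2 : M₀ * (μ (V k)).toReal < M₀ * (ε' / (2 * M₀)) :=
      (mul_lt_mul_iff_right₀ hM₀).2 hμbound'
    have h3 : M₀ * (ε' / (2 * M₀)) = ε' / 2 := by
      field_simp
    linarith
  have hterm1' : ‖ψ‖ * ε ≤ ε' / 2 := by
    have hp : (0:ℝ) < ‖ψ‖ + 1 := by positivity
    rw [hεdef, mul_div_assoc']
    rw [div_le_div_iff₀ (by positivity) (by positivity)]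
    nlinarith [norm_nonneg ψ, le_of_lt hε']
  calc pos ψ (v k) ≤ pos ψ (ε • (1 : C(X, ℝ))) + pos ψ w := hsplit
    _ ≤ ‖ψ‖ * ε + M₀ * rc ψ C := by
        refine add_le_add hterm1 ?_
        linarith [hterm2]
    _ < ε' := by linarith

lemma abs_apply_le (ψ : C(X, ℝ) →L[ℝ] ℝ) (u : C(X, ℝ)) :
    |ψ u| ≤ pos ψ (u ⊔ (-u)) + pos (-ψ) (u ⊔ (-u)) := by
  set A : C(X, ℝ) := u ⊔ (-u) with hAdef
  set up : C(X, ℝ) := u ⊔ 0 with hupdef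
  set um : C(X, ℝ) := (-u) ⊔ 0 with humdef
  have hA0 : 0 ≤ A := by
    rw [ContinuousMap.le_def]; intro a
    simp only [hAdef, ContinuousMap.sup_apply, ContinuousMap.neg_apply, ContinuousMap.zero_apply]
    rcases le_total (u a) 0 with h | h
    · exact le_trans (by linarith) le_sup_right
    · exact le_trans h le_sup_left
  have hup0 : 0 ≤ up := le_sup_right
  have hum0 : 0 ≤ um := le_sup_right
  have hupA : up ≤ A := by
    rw [ContinuousMap.le_def]; intro a
    simp only [hupdef, hAdef, ContinuousMap.sup_apply, ContinuousMap.neg_apply,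
      ContinuousMap.zero_apply]
    rcases le_total (u a) 0 with h | h
    · rw [sup_eq_right.2 h]; exact le_trans (by linarith) le_sup_right
    · rw [sup_eq_left.2 h]; exact le_sup_left
  have humA : um ≤ A := by
    rw [ContinuousMap.le_def]; intro a
    simp only [humdef, hAdef, ContinuousMap.sup_apply, ContinuousMap.neg_apply,
      ContinuousMap.zero_apply]
    rcases le_total (u a) 0 with h | h
    · rw [sup_eq_left.2 (by linarith : (0:ℝ) ≤ -u a)]; exact le_sup_right
    · rw [sup_eq_right.2 (by linarith : -u a ≤ (0:ℝ))]; exact le_trans h le_sup_left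
  have hdecomp : u = up - um := by
    ext a
    simp only [hupdef, humdef, ContinuousMap.sub_apply, ContinuousMap.sup_apply,
      ContinuousMap.neg_apply, ContinuousMap.zero_apply]
    rcases le_total (u a) 0 with h | h
    · rw [sup_eq_right.2 h, sup_eq_left.2 (by linarith : (0:ℝ) ≤ -u a)]; ring
    · rw [sup_eq_left.2 h, sup_eq_right.2 (by linarith : -u a ≤ (0:ℝ))]; ring
  have h1 : ψ up ≤ pos ψ A := le_trans (le_pos ψ hup0) (pos_mono ψ hup0 hupA)
  have h2 : ψ um ≤ pos ψ A := le_trans (le_pos ψ hum0) (pos_mono ψ hum0 humA)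
  have h3 : -ψ up ≤ pos (-ψ) A := by
    have : (-ψ) up ≤ pos (-ψ) A := le_trans (le_pos (-ψ) hup0) (pos_mono (-ψ) hup0 hupA)
    simpa using this
  have h4 : -ψ um ≤ pos (-ψ) A := by
    have : (-ψ) um ≤ pos (-ψ) A := le_trans (le_pos (-ψ) hum0) (pos_mono (-ψ) hum0 humA)
    simpa using this
  have hψu : ψ u = ψ up - ψ um := by rw [hdecomp, map_sub]
  rw [abs_le]
  constructor
  · rw [hψu]
    have hp1 : 0 ≤ pos ψ A := pos_nonneg ψ hA0
    linarith
  · rw [hψu]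
    linarith

/-- Bounded sequences in `C(X, ℝ)` tending to zero pointwise tend to zero against any
continuous linear functional. -/
lemma tendsto_apply_of_pointwise (ψ : C(X, ℝ) →L[ℝ] ℝ) {u : ℕ → C(X, ℝ)} {M : ℝ}
    (hM : ∀ k, ‖u k‖ ≤ M)
    (hpt : ∀ x : X, Tendsto (fun k => (u k) x) atTop (𝓝 0)) :
    Tendsto (fun k => ψ (u k)) atTop (𝓝 0) := by
  set A : ℕ → C(X, ℝ) := fun k => (u k) ⊔ (-(u k)) with hAdef
  have hA0 : ∀ k, 0 ≤ A k := by
    intro k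
    rw [ContinuousMap.le_def]; intro a
    simp only [hAdef, ContinuousMap.sup_apply, ContinuousMap.neg_apply, ContinuousMap.zero_apply]
    rcases le_total ((u k) a) 0 with h | h
    · exact le_trans (by linarith) le_sup_right
    · exact le_trans h le_sup_left
  have hAM : ∀ k, ‖A k‖ ≤ M := by
    intro k
    have hM0 : (0:ℝ) ≤ M := le_trans (norm_nonneg (u 0)) (hM 0)
    refine (ContinuousMap.norm_le _ hM0).2 fun x => ?_
    have h1 : |(u k) x| ≤ ‖u k‖ := by simpa using (u k).norm_coe_le_norm x
    have h2 : (A k) x = |(u k) x| := by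
      simp only [hAdef, ContinuousMap.sup_apply, ContinuousMap.neg_apply]
      rw [abs_eq_max_neg]
    rw [Real.norm_eq_abs, h2, abs_abs]
    exact le_trans h1 (hM k)
  have hApt : ∀ x : X, Tendsto (fun k => (A k) x) atTop (𝓝 0) := by
    intro x
    have h2 : ∀ k, (A k) x = |(u k) x| := by
      intro k
      simp only [hAdef, ContinuousMap.sup_apply, ContinuousMap.neg_apply]
      rw [abs_eq_max_neg]
    simp only [h2]
    have := (hpt x).abs
    simpa using this
  have hpos1 := pos_tendsto ψ hA0 hAM hApt
  have hpos2 := pos_tendsto (-ψ) hA0 hAM hApt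
  have hsum : Tendsto (fun k => pos ψ (A k) + pos (-ψ) (A k)) atTop (𝓝 0) := by
    have := hpos1.add hpos2
    simpa using this
  refine squeeze_zero_norm (fun k => ?_) hsum
  rw [Real.norm_eq_abs]
  exact abs_apply_le ψ (u k)

end ContentPart


end FunctionSide


section OperatorSide

variable {𝕜 : Type*} [RCLike 𝕜] {E F : Type*}
  [NormedAddCommGroup E] [NormedSpace 𝕜 E]
  [NormedAddCommGroup F] [NormedSpace 𝕜 F]

lemma adj_apply (T : E →L[𝕜] F) (y' : StrongDual 𝕜 F) (x : E) :
    adj 𝕜 T y' x = y' (T x) := rfl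

lemma adj_eq_comp (T : E →L[𝕜] F) (y' : StrongDual 𝕜 F) : adj 𝕜 T y' = y'.comp T := rfl

lemma adj_norm_le (T : E →L[𝕜] F) (y' : StrongDual 𝕜 F) : ‖adj 𝕜 T y'‖ ≤ ‖T‖ * ‖y'‖ := by
  rw [adj_eq_comp]
  calc ‖y'.comp T‖ ≤ ‖y'‖ * ‖T‖ := ContinuousLinearMap.opNorm_comp_le _ _
    _ = ‖T‖ * ‖y'‖ := mul_comm _ _

lemma opNorm_le_of_closedBall {G H : Type*} [NormedAddCommGroup G] [NormedSpace 𝕜 G]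
    [NormedAddCommGroup H] [NormedSpace 𝕜 H] {f : G →L[𝕜] H} {c : ℝ} (hc : 0 ≤ c)
    (h : ∀ x : G, ‖x‖ ≤ 1 → ‖f x‖ ≤ c) : ‖f‖ ≤ c := by
  refine f.opNorm_le_bound hc fun x => ?_
  rcases eq_or_ne x 0 with rfl | hx
  · simp
  · have hxn : (0:ℝ) < ‖x‖ := norm_pos_iff.2 hx
    have hne : ((‖x‖ : ℝ) : 𝕜) ≠ 0 := by
      simpa using ne_of_gt hxn
    set y : G := ((‖x‖ : ℝ) : 𝕜)⁻¹ • x with hydef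
    have hy : ‖y‖ ≤ 1 := by
      rw [hydef, norm_smul, norm_inv, RCLike.norm_ofReal, abs_of_pos hxn,
        inv_mul_cancel₀ (ne_of_gt hxn)]
    have hxy : x = ((‖x‖ : ℝ) : 𝕜) • y := by
      rw [hydef, smul_smul, mul_inv_cancel₀ hne, one_smul]
    have hfx : ‖f x‖ = ‖x‖ * ‖f y‖ := by
      conv_lhs => rw [hxy]
      rw [f.map_smul, norm_smul, RCLike.norm_ofReal, abs_of_pos hxn]
    rw [hfx, mul_comm]
    exact mul_le_mul_of_nonneg_right (h y hy) (le_of_lt hxn)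

/-- The adjoint of a compact operator is weak-star-to-norm continuous on the unit ball
of the dual. -/
lemma adj_continuousOn {S : E →L[𝕜] F} (hS : IsCompactOperator (⇑S)) :
    ContinuousOn (fun y' : WeakDual 𝕜 F => adj 𝕜 S (WeakDual.toStrongDual y'))
      (WeakDual.toStrongDual ⁻¹' Metric.closedBall 0 1) := by
  obtain ⟨D, hDcomp, hDsub⟩ :=
    hS.image_closedBall_subset_compact (𝕜₁ := 𝕜) (f := (S : E →ₗ[𝕜] F)) 1
  intro y'₀ hy'₀
  rw [ContinuousWithinAt]
  rw [Metric.tendsto_nhds]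
  intro ε hε
  set δ : ℝ := ε / 4 with hδdef
  have hδ : 0 < δ := by positivity
  obtain ⟨t, htfin, htsub⟩ := (Metric.totallyBounded_iff.1 hDcomp.totallyBounded) δ hδ
  set O : Set (WeakDual 𝕜 F) := ⋂ z ∈ t, {y' : WeakDual 𝕜 F | ‖y' z - y'₀ z‖ < δ} with hO
  have hOopen : IsOpen O := by
    refine htfin.isOpen_biInter fun z _ => ?_
    have hcont : Continuous fun y' : WeakDual 𝕜 F => ‖y' z - y'₀ z‖ :=
      ((WeakDual.eval_continuous z).sub continuous_const).norm
    exact isOpen_lt hcont continuous_const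
  have hy'₀O : y'₀ ∈ O := by
    refine Set.mem_iInter₂.2 fun z _ => ?_
    simpa using hδ
  filter_upwards [mem_nhdsWithin_of_mem_nhds (hOopen.mem_nhds hy'₀O), self_mem_nhdsWithin]
    with y' hyO hyB
  rw [dist_eq_norm]
  have hsub : adj 𝕜 S (WeakDual.toStrongDual y') - adj 𝕜 S (WeakDual.toStrongDual y'₀)
      = adj 𝕜 S (WeakDual.toStrongDual y' - WeakDual.toStrongDual y'₀) := by
    rw [map_sub]
  rw [hsub]
  set v : StrongDual 𝕜 F := WeakDual.toStrongDual y' - WeakDual.toStrongDual y'₀ with hv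
  have hnv : ‖v‖ ≤ 2 := by
    have h1 : ‖WeakDual.toStrongDual y'‖ ≤ 1 := by
      simpa [Metric.mem_closedBall, dist_zero_right] using hyB
    have h2 : ‖WeakDual.toStrongDual y'₀‖ ≤ 1 := by
      simpa [Metric.mem_closedBall, dist_zero_right] using hy'₀
    calc ‖v‖ ≤ ‖WeakDual.toStrongDual y'‖ + ‖WeakDual.toStrongDual y'₀‖ := norm_sub_le _ _
      _ ≤ 2 := by linarith
  have hbound : ‖adj 𝕜 S v‖ ≤ 3 * δ := by
    refine opNorm_le_of_closedBall (by positivity) fun x hx => ?_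
    have hSx : S x ∈ D := hDsub ⟨x, by simpa [Metric.mem_closedBall, dist_zero_right] using hx, rfl⟩
    obtain ⟨z, hzt, hzball⟩ := Set.mem_iUnion₂.1 (htsub hSx)
    have hdist : ‖S x - z‖ < δ := by
      rw [← dist_eq_norm]
      exact Metric.mem_ball.1 hzball
    have hzval : ‖v z‖ < δ := by
      have := Set.mem_iInter₂.1 hyO z hzt
      simpa [hv] using this
    have hsplit : v (S x) = v (S x - z) + v z := by
      rw [map_sub]; ring
    calc ‖adj 𝕜 S v x‖ = ‖v (S x)‖ := by rw [adj_apply]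
      _ = ‖v (S x - z) + v z‖ := by rw [hsplit]
      _ ≤ ‖v (S x - z)‖ + ‖v z‖ := norm_add_le _ _
      _ ≤ ‖v‖ * ‖S x - z‖ + ‖v z‖ := by
          exact add_le_add_left (v.le_opNorm _) _
      _ ≤ 2 * δ + δ := by
          have := mul_le_mul hnv (le_of_lt hdist) (norm_nonneg _) (by norm_num)
          nlinarith [norm_nonneg (v z), le_of_lt hzval, le_of_lt hdist, norm_nonneg (S x - z)]
      _ = 3 * δ := by ring
  calc ‖adj 𝕜 S v‖ ≤ 3 * δ := hbound
    _ < ε := by rw [hδdef]; linarith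

/-- Uniform boundedness from weak convergence of `S m x` for all `x`. -/
lemma exists_bound [CompleteSpace E] [CompleteSpace F] {S : ℕ → E →L[𝕜] F}
    (hnull : ∀ (x : E) (y' : StrongDual 𝕜 F), Tendsto (fun m => y' (S m x)) atTop (𝓝 0)) :
    ∃ M : ℝ, ∀ m, ‖S m‖ ≤ M := by
  apply banach_steinhaus
  intro x
  have hx : ∃ C, ∀ m, ‖inclusionInDoubleDual 𝕜 F (S m x)‖ ≤ C := by
    apply banach_steinhaus
    intro y'
    have h1 : Tendsto (fun m => ‖y' (S m x)‖) atTop (𝓝 0) := by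
      simpa using (hnull x y').norm
    obtain ⟨C, hC⟩ := h1.bddAbove_range
    exact ⟨C, fun m => by
      have := hC ⟨m, rfl⟩
      simpa [NormedSpace.dual_def] using this⟩
  obtain ⟨C, hC⟩ := hx
  refine ⟨C, fun m => ?_⟩
  have hiso : ‖inclusionInDoubleDual 𝕜 F (S m x)‖ = ‖S m x‖ :=
    (NormedSpace.inclusionInDoubleDualLi 𝕜).norm_map (S m x)
  rw [← hiso]
  exact hC m

lemma theta_le (V : E →L[𝕜] F) {χ : StrongDual 𝕜 (StrongDual 𝕜 E)} {y' : StrongDual 𝕜 F}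
    (hχ : ‖χ‖ ≤ 1) (hy' : ‖y'‖ ≤ 1) : ‖χ (adj 𝕜 V y')‖ ≤ ‖V‖ := by
  calc ‖χ (adj 𝕜 V y')‖ ≤ ‖χ‖ * ‖adj 𝕜 V y'‖ := χ.le_opNorm _
    _ ≤ 1 * (‖V‖ * ‖y'‖) := by
        refine mul_le_mul hχ (adj_norm_le V y') (norm_nonneg _) zero_le_one
    _ ≤ 1 * (‖V‖ * 1) := by
        refine mul_le_mul_of_nonneg_left ?_ zero_le_one
        exact mul_le_mul_of_nonneg_left hy' (norm_nonneg _)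
    _ = ‖V‖ := by ring

lemma opnorm_le_of_pairs (V : E →L[𝕜] F) {c : ℝ} (hc : 0 ≤ c)
    (h : ∀ (χ : StrongDual 𝕜 (StrongDual 𝕜 E)) (y' : StrongDual 𝕜 F), ‖χ‖ ≤ 1 → ‖y'‖ ≤ 1 →
      ‖χ (adj 𝕜 V y')‖ ≤ c) : ‖V‖ ≤ c := by
  refine opNorm_le_of_closedBall hc fun x hx => ?_
  have h1 : ‖V x‖ = ‖inclusionInDoubleDual 𝕜 F (V x)‖ :=
    ((NormedSpace.inclusionInDoubleDualLi 𝕜).norm_map (V x)).symm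
  rw [h1]
  refine opNorm_le_of_closedBall hc fun y' hy' => ?_
  have h2 : inclusionInDoubleDual 𝕜 F (V x) y' = inclusionInDoubleDual 𝕜 E x (adj 𝕜 V y') := by
    rw [NormedSpace.dual_def, NormedSpace.dual_def, adj_apply]
  rw [h2]
  have h3 : ‖inclusionInDoubleDual 𝕜 E x‖ ≤ 1 :=
    le_trans (le_of_eq ((NormedSpace.inclusionInDoubleDualLi 𝕜).norm_map x)) hx
  exact h _ y' h3 hy'

lemma norm_I_le_one : ‖(RCLike.I : 𝕜)‖ ≤ 1 := by
  rcases RCLike.I_mul_I_ax (K := 𝕜) with h | h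
  · rw [h]; simp
  · have h2 : ‖(RCLike.I : 𝕜)‖ * ‖(RCLike.I : 𝕜)‖ = 1 := by
      rw [← norm_mul, h]; simp
    nlinarith [norm_nonneg (RCLike.I : 𝕜)]

variable (𝕜)

/-- Post-composition with `ofReal` as a continuous linear map `C(X, ℝ) → C(X, 𝕜)`. -/
def creal (X : Type*) [TopologicalSpace X] [CompactSpace X] : C(X, ℝ) →L[ℝ] C(X, 𝕜) :=
  LinearMap.mkContinuous
    { toFun := fun v => ⟨fun z => ((v z : ℝ) : 𝕜), RCLike.continuous_ofReal.comp v.continuous⟩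
      map_add' := fun v w => by
        ext z
        simp only [ContinuousMap.coe_mk, ContinuousMap.add_apply, Pi.add_apply]
        push_cast
        ring
      map_smul' := fun r v => by
        ext z
        simp only [ContinuousMap.coe_mk, ContinuousMap.smul_apply, Pi.smul_apply,
          smul_eq_mul, RingHom.id_apply]
        rw [RCLike.real_smul_eq_coe_mul]
        push_cast
        ring }
    1 (fun v => by
      rw [one_mul]
      refine (ContinuousMap.norm_le _ (norm_nonneg v)).2 fun z => ?_
      simp only [LinearMap.coe_mk, AddHom.coe_mk, ContinuousMap.coe_mk]
      rw [RCLike.norm_ofReal]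
      have := v.norm_coe_le_norm z
      simpa using this)

/-- Post-composition with `fun r => ofReal r * I` as a continuous linear map. -/
def cimag (X : Type*) [TopologicalSpace X] [CompactSpace X] : C(X, ℝ) →L[ℝ] C(X, 𝕜) :=
  LinearMap.mkContinuous
    { toFun := fun v => ⟨fun z => ((v z : ℝ) : 𝕜) * RCLike.I,
        (RCLike.continuous_ofReal.comp v.continuous).mul continuous_const⟩
      map_add' := fun v w => by
        ext z
        simp only [ContinuousMap.coe_mk, ContinuousMap.add_apply, Pi.add_apply]
        push_cast
        ring
      map_smul' := fun r v => by
        ext z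
        simp only [ContinuousMap.coe_mk, ContinuousMap.smul_apply, Pi.smul_apply,
          smul_eq_mul, RingHom.id_apply]
        rw [RCLike.real_smul_eq_coe_mul]
        push_cast
        ring }
    1 (fun v => by
      rw [one_mul]
      refine (ContinuousMap.norm_le _ (norm_nonneg v)).2 fun z => ?_
      simp only [LinearMap.coe_mk, AddHom.coe_mk, ContinuousMap.coe_mk]
      calc ‖((v z : ℝ) : 𝕜) * RCLike.I‖ ≤ ‖((v z : ℝ) : 𝕜)‖ * ‖(RCLike.I : 𝕜)‖ :=
            norm_mul_le _ _
        _ ≤ ‖((v z : ℝ) : 𝕜)‖ * 1 := by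
            exact mul_le_mul_of_nonneg_left norm_I_le_one (norm_nonneg _)
        _ ≤ ‖v‖ := by
            rw [mul_one, RCLike.norm_ofReal]
            simpa using v.norm_coe_le_norm z)

variable {𝕜}

end OperatorSide

section MainProp

variable {𝕜 : Type*} [RCLike 𝕜] {E F : Type*}
  [NormedAddCommGroup E] [NormedSpace 𝕜 E] [CompleteSpace E]
  [NormedAddCommGroup F] [NormedSpace 𝕜 F] [CompleteSpace F]

lemma propA (hE : IsReflexive 𝕜 E)
    {S : ℕ → E →L[𝕜] F} (hcomp : ∀ m, IsCompactOperator (⇑(S m)))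
    (hnull : ∀ (x : E) (y' : StrongDual 𝕜 F), Tendsto (fun m => y' (S m x)) atTop (𝓝 0))
    {ε : ℝ} (hε : 0 < ε) :
    ∃ (n : ℕ) (w : Fin n → ℝ) (idx : Fin n → ℕ),
      (∀ i, 0 ≤ w i) ∧ (∑ i, w i = 1) ∧ ‖∑ i, ((w i : ℝ) : 𝕜) • S (idx i)‖ < ε := by
  by_contra hcon
  push_neg at hcon
  obtain ⟨M, hM⟩ := exists_bound hnull
  have hM0 : 0 ≤ M := le_trans (norm_nonneg (S 0)) (hM 0)
  classical
  set SB1 : Set (WeakDual 𝕜 (StrongDual 𝕜 E)) := ⇑WeakDual.toStrongDual ⁻¹' Metric.closedBall 0 1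
    with hSB1def
  set SB2 : Set (WeakDual 𝕜 F) := ⇑WeakDual.toStrongDual ⁻¹' Metric.closedBall 0 1 with hSB2def
  have hSB1 : IsCompact SB1 := WeakDual.isCompact_closedBall (𝕜 := 𝕜) 0 1
  have hSB2 : IsCompact SB2 := WeakDual.isCompact_closedBall (𝕜 := 𝕜) 0 1
  set KB : Set (WeakDual 𝕜 (StrongDual 𝕜 E) × WeakDual 𝕜 F) := SB1 ×ˢ SB2 with hKBdef
  have hKB : IsCompact KB := hSB1.prod hSB2
  set Θ : WeakDual 𝕜 (StrongDual 𝕜 E) × WeakDual 𝕜 F → (ℕ → 𝕜) :=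
    fun p m => WeakDual.toStrongDual p.1 (adj 𝕜 (S m) (WeakDual.toStrongDual p.2)) with hΘdef
  have hmem1 : ∀ p : WeakDual 𝕜 (StrongDual 𝕜 E) × WeakDual 𝕜 F, p ∈ KB →
      ‖WeakDual.toStrongDual p.1‖ ≤ 1 := by
    intro p hp
    have := hp.1
    exact (mem_closedBall_zero_iff (E := StrongDual 𝕜 (StrongDual 𝕜 E))).1 this
  have hmem2 : ∀ p : WeakDual 𝕜 (StrongDual 𝕜 E) × WeakDual 𝕜 F, p ∈ KB →
      ‖WeakDual.toStrongDual p.2‖ ≤ 1 := by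
    intro p hp
    have := hp.2
    exact mem_closedBall_zero_iff.1 this
  -- continuity of Θ on KB
  have hΘcont : ContinuousOn Θ KB := by
    rw [continuousOn_pi]
    intro m
    intro p₀ hp₀
    have hsnd : ContinuousWithinAt (fun p : WeakDual 𝕜 (StrongDual 𝕜 E) × WeakDual 𝕜 F =>
        adj 𝕜 (S m) (WeakDual.toStrongDual p.2)) KB p₀ := by
      have h1 : ContinuousWithinAt (fun y' : WeakDual 𝕜 F =>
          adj 𝕜 (S m) (WeakDual.toStrongDual y')) SB2 p₀.2 :=
        (adj_continuousOn (hcomp m)) p₀.2 hp₀.2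
      exact h1.comp (continuous_snd.continuousWithinAt) (fun p hp => hp.2)
    have hterm2 : Tendsto (fun p : WeakDual 𝕜 (StrongDual 𝕜 E) × WeakDual 𝕜 F =>
        WeakDual.toStrongDual p.1 (adj 𝕜 (S m) (WeakDual.toStrongDual p₀.2)))
        (𝓝[KB] p₀) (𝓝 (WeakDual.toStrongDual p₀.1 (adj 𝕜 (S m) (WeakDual.toStrongDual p₀.2)))) := by
      have hcont : Continuous (fun p : WeakDual 𝕜 (StrongDual 𝕜 E) × WeakDual 𝕜 F =>
          p.1 (adj 𝕜 (S m) (WeakDual.toStrongDual p₀.2))) :=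
        (WeakDual.eval_continuous _).comp continuous_fst
      exact hcont.continuousWithinAt
    have ha : Tendsto (fun p : WeakDual 𝕜 (StrongDual 𝕜 E) × WeakDual 𝕜 F =>
        ‖adj 𝕜 (S m) (WeakDual.toStrongDual p.2)
          - adj 𝕜 (S m) (WeakDual.toStrongDual p₀.2)‖) (𝓝[KB] p₀) (𝓝 0) := by
      have h2 := (hsnd.sub
        (continuousWithinAt_const (b := adj 𝕜 (S m) (WeakDual.toStrongDual p₀.2)))).norm
      have h3 : ‖adj 𝕜 (S m) (WeakDual.toStrongDual p₀.2)
          - adj 𝕜 (S m) (WeakDual.toStrongDual p₀.2)‖ = (0 : ℝ) := by simp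
      exact h3 ▸ h2
    have hterm1 : Tendsto (fun p : WeakDual 𝕜 (StrongDual 𝕜 E) × WeakDual 𝕜 F =>
        WeakDual.toStrongDual p.1 (adj 𝕜 (S m) (WeakDual.toStrongDual p.2)
          - adj 𝕜 (S m) (WeakDual.toStrongDual p₀.2))) (𝓝[KB] p₀) (𝓝 0) := by
      refine squeeze_zero_norm' ?_ ha
      filter_upwards [self_mem_nhdsWithin] with p hp
      calc ‖WeakDual.toStrongDual p.1 (adj 𝕜 (S m) (WeakDual.toStrongDual p.2)
            - adj 𝕜 (S m) (WeakDual.toStrongDual p₀.2))‖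
          ≤ ‖WeakDual.toStrongDual p.1‖ * ‖adj 𝕜 (S m) (WeakDual.toStrongDual p.2)
            - adj 𝕜 (S m) (WeakDual.toStrongDual p₀.2)‖ :=
            (WeakDual.toStrongDual p.1).le_opNorm _
        _ ≤ 1 * ‖adj 𝕜 (S m) (WeakDual.toStrongDual p.2)
            - adj 𝕜 (S m) (WeakDual.toStrongDual p₀.2)‖ :=
            mul_le_mul_of_nonneg_right (hmem1 p hp) (norm_nonneg _)
        _ = _ := one_mul _
    have hfun : (fun p : WeakDual 𝕜 (StrongDual 𝕜 E) × WeakDual 𝕜 F => Θ p m) =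
        (fun p : WeakDual 𝕜 (StrongDual 𝕜 E) × WeakDual 𝕜 F =>
          WeakDual.toStrongDual p.1 (adj 𝕜 (S m) (WeakDual.toStrongDual p.2)
            - adj 𝕜 (S m) (WeakDual.toStrongDual p₀.2))
          + WeakDual.toStrongDual p.1 (adj 𝕜 (S m) (WeakDual.toStrongDual p₀.2))) := by
      funext p
      show WeakDual.toStrongDual p.1 (adj 𝕜 (S m) (WeakDual.toStrongDual p.2)) = _
      rw [map_sub]
      ring
    show Tendsto (fun p => Θ p m) (𝓝[KB] p₀) (𝓝 (Θ p₀ m))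
    rw [hfun]
    have hg := hterm1.add hterm2
    rw [zero_add] at hg
    exact hg
  set KS : Set (ℕ → 𝕜) := Θ '' KB with hKSdef
  have hKScomp : IsCompact KS := hKB.image_of_continuousOn hΘcont
  haveI hKSspace : CompactSpace ↥KS := isCompact_iff_compactSpace.1 hKScomp
  set h : ℕ → C(↥KS, 𝕜) := fun m => ⟨fun z => (z : ℕ → 𝕜) m,
    (continuous_apply m).comp continuous_subtype_val⟩ with hhdef
  -- pointwise convergence to 0 on KS (uses reflexivity of E)
  have hptnull : ∀ z : ↥KS, Tendsto (fun m => (h m) z) atTop (𝓝 0) := by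
    rintro ⟨z, p, hp, rfl⟩
    obtain ⟨x, hx⟩ := hE (WeakDual.toStrongDual p.1)
    have heq : ∀ m, (h m) ⟨Θ p, ⟨p, hp, rfl⟩⟩ = WeakDual.toStrongDual p.2 (S m x) := by
      intro m
      show Θ p m = _
      rw [hΘdef]
      dsimp only
      rw [← hx, NormedSpace.dual_def, adj_apply]
    simp only [heq]
    exact hnull x (WeakDual.toStrongDual p.2)
  -- uniform bounds
  have hhval : ∀ (m : ℕ) (z : ↥KS), ‖(h m) z‖ ≤ ‖S m‖ := by
    rintro m ⟨z, p, hp, rfl⟩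
    show ‖Θ p m‖ ≤ ‖S m‖
    rw [hΘdef]
    exact theta_le (S m) (hmem1 p hp) (hmem2 p hp)
  have hhnorm : ∀ m, ‖h m‖ ≤ M := fun m =>
    (ContinuousMap.norm_le _ hM0).2 fun z => le_trans (hhval m z) (hM m)
  -- operator norm of combinations is dominated by sup norm of function combinations
  have hnormge : ∀ (n : ℕ) (w : Fin n → ℝ) (idx : Fin n → ℕ),
      ‖∑ i, ((w i : ℝ) : 𝕜) • S (idx i)‖ ≤ ‖∑ i, w i • h (idx i)‖ := by
    intro n w idx
    refine opnorm_le_of_pairs _ (norm_nonneg _) fun χ y' hχ hy' => ?_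
    set p : WeakDual 𝕜 (StrongDual 𝕜 E) × WeakDual 𝕜 F :=
      (StrongDual.toWeakDual χ, StrongDual.toWeakDual y') with hpdef
    have hpKB : p ∈ KB := by
      constructor
      · show WeakDual.toStrongDual p.1 ∈ Metric.closedBall 0 1
        exact (mem_closedBall_zero_iff (E := StrongDual 𝕜 (StrongDual 𝕜 E))).2 hχ
      · show WeakDual.toStrongDual p.2 ∈ Metric.closedBall 0 1
        exact mem_closedBall_zero_iff.2 hy'
    have hadj : adj 𝕜 (∑ i, ((w i : ℝ) : 𝕜) • S (idx i)) y'
        = ∑ i, ((w i : ℝ) : 𝕜) • adj 𝕜 (S (idx i)) y' := by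
      show ((ContinuousLinearMap.compL 𝕜 E F 𝕜).flip (∑ i, ((w i : ℝ) : 𝕜) • S (idx i))) y' = _
      rw [_root_.map_sum]
      rw [ContinuousLinearMap.sum_apply]
      congr 1
      funext i
      rw [_root_.map_smul, ContinuousLinearMap.smul_apply]
      rfl
    have hval : χ (adj 𝕜 (∑ i, ((w i : ℝ) : 𝕜) • S (idx i)) y')
        = (∑ i, w i • h (idx i)) (⟨Θ p, ⟨p, hpKB, rfl⟩⟩ : ↥KS) := by
      rw [hadj, _root_.map_sum]
      rw [ContinuousMap.sum_apply]
      congr 1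
      funext i
      rw [_root_.map_smul, smul_eq_mul]
      rw [ContinuousMap.smul_apply]
      have hz : (h (idx i)) (⟨Θ p, ⟨p, hpKB, rfl⟩⟩ : ↥KS) = Θ p (idx i) := rfl
      rw [hz, RCLike.real_smul_eq_coe_mul]
      congr 1
    rw [hval]
    exact ContinuousMap.norm_coe_le_norm _ _
  -- every element of the convex hull has norm at least ε
  set Hull : Set C(↥KS, 𝕜) := convexHull ℝ (Set.range h) with hHdef
  have hHullnorm : ∀ g ∈ Hull, ε ≤ ‖g‖ := by
    intro g hg
    rw [hHdef, convexHull_eq] at hg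
    obtain ⟨ι, t, wt, zf, hw0, hw1, hzs, hcm⟩ := hg
    have hidx : ∀ i : {x // x ∈ t}, ∃ m : ℕ, h m = zf i := fun i => hzs i i.2
    choose mfun hmfun using hidx
    set n := t.card with hndef
    set e := t.equivFin with hedef
    set w' : Fin n → ℝ := fun j => wt (e.symm j) with hw'def
    set idx' : Fin n → ℕ := fun j => mfun (e.symm j) with hidx'def
    have hw'0 : ∀ j, 0 ≤ w' j := fun j => hw0 _ (e.symm j).2
    have hw'1 : ∑ j, w' j = 1 := by
      rw [hw'def]
      rw [Equiv.sum_comp e.symm (fun i : {x // x ∈ t} => wt i)]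
      rw [Finset.sum_coe_sort t wt]
      exact hw1
    have hgsum : g = ∑ j, w' j • h (idx' j) := by
      rw [← hcm, Finset.centerMass_eq_of_sum_1 _ _ hw1]
      rw [← Finset.sum_coe_sort t (fun i => wt i • zf i)]
      rw [← Equiv.sum_comp e.symm (fun i : {x // x ∈ t} => wt i • zf i)]
      congr 1
      funext j
      rw [hw'def, hidx'def, hmfun]
    have hV := hcon n w' idx' hw'0 hw'1
    refine le_trans hV ?_
    rw [hgsum]
    exact hnormge n w' idx'
  have hclosednorm : closure Hull ⊆ {g : C(↥KS, 𝕜) | ε ≤ ‖g‖} :=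
    closure_minimal hHullnorm (isClosed_le continuous_const continuous_norm)
  have h0notin : (0 : C(↥KS, 𝕜)) ∉ closure Hull := by
    intro h0
    have := hclosednorm h0
    simp only [Set.mem_setOf_eq, norm_zero] at this
    linarith
  obtain ⟨f, u, hfu, hu0⟩ := geometric_hahn_banach_closed_point
    (convex_convexHull ℝ _).closure isClosed_closure h0notin
  have hu : u < 0 := by simpa using hu0
  have hfh : ∀ m, f (h m) < u := fun m =>
    hfu (h m) (subset_closure (subset_convexHull ℝ _ ⟨m, rfl⟩))
  -- now show f (h m) → 0, a contradiction
  set hre : ℕ → C(↥KS, ℝ) := fun m => ⟨fun z => RCLike.re ((h m) z),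
    RCLike.continuous_re.comp (h m).continuous⟩ with hredef
  set him : ℕ → C(↥KS, ℝ) := fun m => ⟨fun z => RCLike.im ((h m) z),
    RCLike.continuous_im.comp (h m).continuous⟩ with himdef
  have hdecomp : ∀ m, h m = creal 𝕜 ↥KS (hre m) + cimag 𝕜 ↥KS (him m) := by
    intro m
    ext z
    show (h m) z = ((RCLike.re ((h m) z) : ℝ) : 𝕜) + ((RCLike.im ((h m) z) : ℝ) : 𝕜) * RCLike.I
    exact (RCLike.re_add_im _).symm
  have hreM : ∀ m, ‖hre m‖ ≤ M := by
    intro m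
    refine (ContinuousMap.norm_le _ hM0).2 fun z => ?_
    have h1 : |RCLike.re ((h m) z)| ≤ ‖(h m) z‖ := RCLike.abs_re_le_norm _
    have h2 : ‖(h m) z‖ ≤ M := le_trans (hhval m z) (hM m)
    rw [Real.norm_eq_abs]
    show |RCLike.re ((h m) z)| ≤ M
    linarith
  have himM : ∀ m, ‖him m‖ ≤ M := by
    intro m
    refine (ContinuousMap.norm_le _ hM0).2 fun z => ?_
    have h1 : |RCLike.im ((h m) z)| ≤ ‖(h m) z‖ := RCLike.abs_im_le_norm _
    have h2 : ‖(h m) z‖ ≤ M := le_trans (hhval m z) (hM m)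
    rw [Real.norm_eq_abs]
    show |RCLike.im ((h m) z)| ≤ M
    linarith
  have hrept : ∀ z : ↥KS, Tendsto (fun m => (hre m) z) atTop (𝓝 0) := by
    intro z
    have := (RCLike.continuous_re.tendsto (0 : 𝕜)).comp (hptnull z)
    rw [map_zero] at this; exact this
  have himpt : ∀ z : ↥KS, Tendsto (fun m => (him m) z) atTop (𝓝 0) := by
    intro z
    have := (RCLike.continuous_im.tendsto (0 : 𝕜)).comp (hptnull z)
    rw [map_zero] at this; exact this
  have h1 := tendsto_apply_of_pointwise (f.comp (creal 𝕜 ↥KS)) hreM hrept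
  have h2 := tendsto_apply_of_pointwise (f.comp (cimag 𝕜 ↥KS)) himM himpt
  have hfh0 : Tendsto (fun m => f (h m)) atTop (𝓝 0) := by
    have heq : ∀ m, f (h m) = (f.comp (creal 𝕜 ↥KS)) (hre m) + (f.comp (cimag 𝕜 ↥KS)) (him m) := by
      intro m
      rw [ContinuousLinearMap.comp_apply, ContinuousLinearMap.comp_apply, ← map_add, ← hdecomp]
    simp only [heq]
    simpa using h1.add h2
  obtain ⟨N, hN⟩ := Metric.tendsto_atTop.1 hfh0 (-u) (by linarith)
  have := hN N (le_refl N)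
  rw [Real.dist_eq, sub_zero] at this
  have habs : f (h N) ≤ |f (h N)| := le_abs_self _
  have := hfh N
  have h3 : |f (h N)| < -u := by
    have := hN N (le_refl N)
    rw [Real.dist_eq, sub_zero] at this
    exact this
  -- f (h N) < u < 0, so |f (h N)| ≥ -f (h N) > -u, contradiction
  have h4 : -f (h N) ≤ |f (h N)| := neg_le_abs _
  linarith

end MainProp

end WCProof

theorem stmt1 {𝕜 E F : Type*} [RCLike 𝕜]
    [NormedAddCommGroup E] [NormedSpace 𝕜 E] [CompleteSpace E]
    [NormedAddCommGroup F] [NormedSpace 𝕜 F] [CompleteSpace F]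
    (hE : IsReflexive 𝕜 E) (hF : IsReflexive 𝕜 F)
    (G : Submodule 𝕜 (E →L[𝕜] F)) (hGc : IsClosed (G : Set (E →L[𝕜] F)))
    (hGK : ∀ T ∈ G, IsCompactOperator (⇑T : E → F))
    (T : ℕ → G) (T₀ : G) :
    (∀ φ : StrongDual 𝕜 G, Tendsto (fun m => φ (T m)) atTop (𝓝 (φ T₀))) ↔
      ∀ (x : E) (y' : StrongDual 𝕜 F),
        Tendsto (fun m => y' ((T m : E →L[𝕜] F) x)) atTop (𝓝 (y' ((T₀ : E →L[𝕜] F) x))) := by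
  constructor
  · intro hφ x y'
    have h := hφ (y'.comp ((ContinuousLinearMap.apply 𝕜 F x).comp G.subtypeL))
    simpa [ContinuousLinearMap.comp_apply, ContinuousLinearMap.apply_apply,
      Submodule.subtypeL_apply] using h
  · intro hw φ
    by_contra hc
    rw [Metric.tendsto_atTop] at hc
    push_neg at hc
    obtain ⟨ε, hε, hfreq⟩ := hc
    obtain ⟨s, hsmono, hs⟩ := Filter.extraction_of_frequently_atTop
      (Filter.frequently_atTop.2 hfreq)
    -- hs : ∀ k, ε ≤ dist (φ (T (s k))) (φ T₀)
    set z : ℕ → 𝕜 := fun k => φ (T (s k)) - φ T₀ with hzdef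
    have hz : ∀ k, ε ≤ ‖z k‖ := by
      intro k
      have := hs k
      rwa [dist_eq_norm] at this
    have hzne : ∀ k, ((‖z k‖ : ℝ) : 𝕜) ≠ 0 := by
      intro k
      have h1 : (0:ℝ) < ‖z k‖ := lt_of_lt_of_le hε (hz k)
      simpa using ne_of_gt h1
    set w : ℕ → 𝕜 := fun k => ((‖z k‖ : ℝ) : 𝕜)⁻¹ * z k with hwdef
    have hwnorm : ∀ k, w k ∈ Metric.sphere (0 : 𝕜) 1 := by
      intro k
      rw [mem_sphere_zero_iff_norm, hwdef]
      have h1 : (0:ℝ) < ‖z k‖ := lt_of_lt_of_le hε (hz k)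
      rw [norm_mul, norm_inv, RCLike.norm_ofReal, abs_of_pos h1]
      exact inv_mul_cancel₀ (ne_of_gt h1)
    obtain ⟨u, humem, t, htmono, htconv⟩ :=
      (isCompact_sphere (0 : 𝕜) 1).tendsto_subseq hwnorm
    have hu : ‖u‖ = 1 := mem_sphere_zero_iff_norm.1 humem
    obtain ⟨K₀, hK₀⟩ := Metric.tendsto_atTop.1 htconv (1/2) (by norm_num)
    set r : ℕ → ℕ := fun k => s (t (k + K₀)) with hrdef
    have hrmono : StrictMono r :=
      hsmono.comp (htmono.comp (fun a b hab => by omega))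
    -- key lower bound
    have hkey : ∀ k, ε / 2 ≤ RCLike.re ((starRingEnd 𝕜) u * (φ (T (r k)) - φ T₀)) := by
      intro k
      set j := t (k + K₀) with hjdef
      have hwj : ‖w j - u‖ < 1/2 := by
        have := hK₀ (k + K₀) (by omega)
        rwa [dist_eq_norm] at this
      have hzj : φ (T (r k)) - φ T₀ = z j := rfl
      rw [hzj]
      have hzfac : z j = ((‖z j‖ : ℝ) : 𝕜) * w j := by
        rw [hwdef, ← mul_assoc, mul_inv_cancel₀ (hzne j), one_mul]
      have hre1 : RCLike.re ((starRingEnd 𝕜) u * u) = 1 := by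
        rw [RCLike.conj_mul]
        rw [hu]
        norm_num
      have hre2 : |RCLike.re ((starRingEnd 𝕜) u * (w j - u))| ≤ ‖w j - u‖ := by
        calc |RCLike.re ((starRingEnd 𝕜) u * (w j - u))| ≤ ‖(starRingEnd 𝕜) u * (w j - u)‖ :=
              RCLike.abs_re_le_norm _
          _ ≤ ‖(starRingEnd 𝕜) u‖ * ‖w j - u‖ := norm_mul_le _ _
          _ = ‖w j - u‖ := by rw [RCLike.norm_conj, hu, one_mul]
      have hre3 : (1:ℝ)/2 ≤ RCLike.re ((starRingEnd 𝕜) u * w j) := by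
        have hsplit : (starRingEnd 𝕜) u * w j
            = (starRingEnd 𝕜) u * u + (starRingEnd 𝕜) u * (w j - u) := by ring
        rw [hsplit, map_add, hre1]
        have := abs_le.1 hre2
        linarith [this.1, hwj]
      have hzjn : (0:ℝ) < ‖z j‖ := lt_of_lt_of_le hε (hz j)
      calc ε / 2 ≤ ‖z j‖ * (1/2) := by nlinarith [hz j]
        _ ≤ ‖z j‖ * RCLike.re ((starRingEnd 𝕜) u * w j) :=
            mul_le_mul_of_nonneg_left hre3 (le_of_lt hzjn)
        _ = RCLike.re ((starRingEnd 𝕜) u * z j) := by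
            conv_rhs => rw [hzfac]
            rw [mul_comm ((starRingEnd 𝕜) u) (((‖z j‖ : ℝ) : 𝕜) * w j), mul_assoc]
            rw [RCLike.re_ofReal_mul]
            ring_nf
    -- apply Proposition A
    set S : ℕ → E →L[𝕜] F := fun k => ((T (r k) : E →L[𝕜] F) - (T₀ : E →L[𝕜] F)) with hSdef
    have hcomp : ∀ k, IsCompactOperator (⇑(S k)) := by
      intro k
      rw [hSdef]
      dsimp only
      rw [ContinuousLinearMap.coe_sub']
      exact (hGK _ (SetLike.coe_mem (T (r k)))).sub (hGK _ (SetLike.coe_mem T₀))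
    have hnull : ∀ (x : E) (y' : StrongDual 𝕜 F), Tendsto (fun k => y' (S k x)) atTop (𝓝 0) := by
      intro x y'
      have h1 := (hw x y').comp (hrmono.tendsto_atTop)
      have h2 := h1.sub (tendsto_const_nhds (x := y' ((T₀ : E →L[𝕜] F) x)))
      rw [sub_self] at h2
      have heq : (fun k => y' (S k x))
          = fun k => y' ((T (r k) : E →L[𝕜] F) x) - y' ((T₀ : E →L[𝕜] F) x) := by
        funext k
        rw [hSdef]
        simp [map_sub]
      rw [heq]
      exact h2
    letI : SeminormedAddCommGroup (E →L[𝕜] F) := inferInstance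
    have hε' : (0:ℝ) < ε / (2 * (‖φ‖ + 1)) := by positivity
    obtain ⟨n, wt, idx, hwt0, hwt1, hVnorm⟩ := WCProof.propA hE hcomp hnull hε'
    set V : E →L[𝕜] F := ∑ i, ((wt i : ℝ) : 𝕜) • S (idx i) with hVdef
    set VG : G := ∑ i, ((wt i : ℝ) : 𝕜) • (T (r (idx i)) - T₀) with hVGdef
    have hcoe : (VG : E →L[𝕜] F) = V := by
      rw [hVGdef, hVdef]
      push_cast
      congr 1
    have hφVG : φ VG = ∑ i, ((wt i : ℝ) : 𝕜) * (φ (T (r (idx i))) - φ T₀) := by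
      rw [hVGdef, map_sum]
      congr 1
      funext i
      rw [_root_.map_smul, smul_eq_mul, map_sub]
    -- lower bound for re (conj u * φ VG)
    have hlow : ε / 2 ≤ RCLike.re ((starRingEnd 𝕜) u * φ VG) := by
      rw [hφVG, Finset.mul_sum, map_sum]
      have hterm : ∀ i : Fin n, wt i * (ε / 2) ≤
          RCLike.re ((starRingEnd 𝕜) u * (((wt i : ℝ) : 𝕜) * (φ (T (r (idx i))) - φ T₀))) := by
        intro i
        have h1 : (starRingEnd 𝕜) u * (((wt i : ℝ) : 𝕜) * (φ (T (r (idx i))) - φ T₀))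
            = ((wt i : ℝ) : 𝕜) * ((starRingEnd 𝕜) u * (φ (T (r (idx i))) - φ T₀)) := by ring
        rw [h1, RCLike.re_ofReal_mul]
        exact mul_le_mul_of_nonneg_left (hkey (idx i)) (hwt0 i)
      calc ε / 2 = ∑ i : Fin n, wt i * (ε / 2) := by
            rw [← Finset.sum_mul, hwt1, one_mul]
        _ ≤ _ := Finset.sum_le_sum fun i _ => hterm i
    -- upper bound
    have hup : RCLike.re ((starRingEnd 𝕜) u * φ VG) < ε / 2 := by
      have h1 : RCLike.re ((starRingEnd 𝕜) u * φ VG) ≤ ‖(starRingEnd 𝕜) u * φ VG‖ :=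
        RCLike.re_le_norm _
      have h2 : ‖(starRingEnd 𝕜) u * φ VG‖ ≤ ‖φ VG‖ := by
        calc ‖(starRingEnd 𝕜) u * φ VG‖ ≤ ‖(starRingEnd 𝕜) u‖ * ‖φ VG‖ := norm_mul_le _ _
          _ = ‖φ VG‖ := by rw [RCLike.norm_conj, hu, one_mul]
      have h3 : ‖φ VG‖ ≤ ‖φ‖ * ‖VG‖ := φ.le_opNorm _
      have h4 : ‖VG‖ = ‖V‖ := by rw [Submodule.coe_norm, hcoe]
      have h5 : ‖φ‖ * ‖V‖ ≤ (‖φ‖ + 1) * ‖V‖ :=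
        mul_le_mul_of_nonneg_right (by linarith [norm_nonneg φ]) (norm_nonneg V)
      have h6 : (‖φ‖ + 1) * ‖V‖ < (‖φ‖ + 1) * (ε / (2 * (‖φ‖ + 1))) := by
        refine (mul_lt_mul_iff_right₀ (by positivity)).2 ?_
        exact hVnorm
      have h7 : (‖φ‖ + 1) * (ε / (2 * (‖φ‖ + 1))) = ε / 2 := by
        field_simp
      calc RCLike.re ((starRingEnd 𝕜) u * φ VG) ≤ ‖φ VG‖ := le_trans h1 h2
        _ ≤ ‖φ‖ * ‖VG‖ := h3
        _ = ‖φ‖ * ‖V‖ := by rw [h4]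
        _ ≤ (‖φ‖ + 1) * ‖V‖ := h5
        _ < ε / 2 := by rw [← h7]; exact h6
    linarith
end
end

section
/- Let G and X be Banach spaces with φ : X' → G an isomorphism, and let π = J_G ∘ φ ∘ J_X' ∘ (φ'')⁻¹ : G'' → G''. Then G'' decomposes as the (internal) direct sum J_G(G) ⊕ ker(π): every θ ∈ G'' can be written uniquely as θ = J_G(Q) + η with Q ∈ G and η ∈ ker(π). -/
open NormedSpace Filter Topology

noncomputable section

theorem stmt17 {𝕜 G X : Type*} [RCLike 𝕜]
    [NormedAddCommGroup G] [NormedSpace 𝕜 G] [CompleteSpace G]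
    [NormedAddCommGroup X] [NormedSpace 𝕜 X] [CompleteSpace X]
    (φ : StrongDual 𝕜 X ≃L[𝕜] G)
    (π : StrongDual 𝕜 (StrongDual 𝕜 G) →L[𝕜] StrongDual 𝕜 (StrongDual 𝕜 G))
    (hπ : π = (inclusionInDoubleDual 𝕜 G).comp (((φ : StrongDual 𝕜 X →L[𝕜] G)).comp
      ((adj 𝕜 (inclusionInDoubleDual 𝕜 X)).comp
        (adj 𝕜 (adj 𝕜 (φ.symm : G →L[𝕜] StrongDual 𝕜 X))))))
    (θ : StrongDual 𝕜 (StrongDual 𝕜 G)) :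
    ∃! p : G × StrongDual 𝕜 (StrongDual 𝕜 G),
      θ = inclusionInDoubleDual 𝕜 G p.1 + p.2 ∧ π p.2 = 0 := by
  set J := inclusionInDoubleDual 𝕜 G with hJ
  set f : StrongDual 𝕜 (StrongDual 𝕜 G) →L[𝕜] G :=
    ((φ : StrongDual 𝕜 X →L[𝕜] G)).comp
      ((adj 𝕜 (inclusionInDoubleDual 𝕜 X)).comp
        (adj 𝕜 (adj 𝕜 (φ.symm : G →L[𝕜] StrongDual 𝕜 X)))) with hf
  have hπ' : ∀ ξ, π ξ = J (f ξ) := fun ξ => by rw [hπ]; rfl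
  have key : ∀ g : G, f (J g) = g := by
    intro g
    have h1 : (adj 𝕜 (inclusionInDoubleDual 𝕜 X))
        ((adj 𝕜 (adj 𝕜 (φ.symm : G →L[𝕜] StrongDual 𝕜 X))) (J g)) = φ.symm g := by
      ext x
      simp [adj, hJ]
    simp only [hf, ContinuousLinearMap.comp_apply, h1]
    exact φ.apply_symm_apply g
  have Jinj : Function.Injective J := (inclusionInDoubleDualLi 𝕜 (E := G)).injective
  refine ⟨(f θ, θ - J (f θ)), ⟨(add_sub_cancel (J (f θ)) θ).symm, ?_⟩, ?_⟩
  · rw [hπ' _]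
    rw [show f (θ - J (f θ)) = f θ - f (J (f θ)) from map_sub f θ (J (f θ)), key, sub_self, map_zero]
  · rintro ⟨Q, η⟩ ⟨h1, h2⟩
    have hQ : J Q = J (f θ) := by
      have : π θ = J Q := by
        rw [h1, map_add, h2, add_zero, hπ' _, key]
      rw [← this, hπ' _]
    have hQ' : Q = f θ := Jinj hQ
    have hη : η = θ - J (f θ) := by
      rw [← hQ']
      rw [h1]; exact (add_sub_cancel_left (J Q) η).symm
    exact Prod.ext hQ' hη
end
end
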